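/- arXiv:1712.10010 — 2 statements merged into one kernel-verified Lean document; each statement's English description precedes it below -/
import Mathlib

section
/- The edge-coloring of a tree T in which each edge e receives as its color the depth d(e) at which it is removed by the recursive balanced-edge-splitting algorithm is a conflict-free connection coloring of T. Consequently cfc(T) ≤ d(T). -/
/-- `c` is a conflict-free connection coloring of `G`: every pair of distinct
vertices is joined by a path on which some color appears on exactly one edge. -/
def IsCFCColoring {V : Type*} (G : SimpleGraph V) (c : Sym2 V → ℕ) : Prop :=
  ∀ u v : V, u ≠ v → ∃ p : G.Walk u v, p.IsPath ∧
    ∃ col : ℕ, (p.edges.filter (fun e => c e = col)).length = 1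

/-- The conflict-free connection number of `G`: the least `k` such that some
coloring of the edges of `G` with colors `0, …, k-1` is a conflict-free
connection coloring. -/
noncomputable def cfcNum {V : Type*} [Fintype V] (G : SimpleGraph V) : ℕ :=
  sInf {k | ∃ c : Sym2 V → ℕ, (∀ e ∈ G.edgeSet, c e < k) ∧ IsCFCColoring G c}
/-- The graph on `V` consisting of the edges of `T` with both ends in `S`,
with the edge `{u, v}` removed. -/
def eRestrict {V : Type*} (T : SimpleGraph V) (S : Set V) (u v : V) : SimpleGraph V :=
  SimpleGraph.fromRel (fun x y => T.Adj x y ∧ x ∈ S ∧ y ∈ S ∧ s(x, y) ≠ s(u, v))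

/-- After removing the edge `{u, v}` from the component `S`, the vertex set of
the piece containing `w`. -/
def side {V : Type*} (T : SimpleGraph V) (S : Set V) (u v w : V) : Set V :=
  {x | (eRestrict T S u v).Reachable w x}

/-- The (absolute) difference of the orders of the two pieces obtained by
removing the edge `{u, v}` from the component `S`. -/
noncomputable def sideDiff {V : Type*} (T : SimpleGraph V) (S : Set V) (u v : V) : ℕ :=
  (((side T S u v u).ncard : ℤ) - ((side T S u v v).ncard : ℤ)).natAbs

/-- The edge `{u, v}` is a balanced edge of the component `S` of `T`:
it minimizes `sideDiff` among all edges of `T` inside `S`. -/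
def BalancedIn {V : Type*} (T : SimpleGraph V) (S : Set V) (u v : V) : Prop :=
  T.Adj u v ∧ u ∈ S ∧ v ∈ S ∧
    ∀ x y : V, T.Adj x y → x ∈ S → y ∈ S → sideDiff T S u v ≤ sideDiff T S x y

/-- `SplitDepth T S d` holds when the recursive balanced-edge-splitting process,
started on the component with vertex set `S`, can terminate in `d` rounds:
a singleton needs `0` rounds, and otherwise one balanced edge is removed and
the process continues in parallel on the two resulting components. -/
inductive SplitDepth {V : Type*} (T : SimpleGraph V) : Set V → ℕ → Prop
  | single (v : V) : SplitDepth T {v} 0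
  | split (S : Set V) (u v : V) (d₁ d₂ : ℕ) :
      BalancedIn T S u v →
      SplitDepth T (side T S u v u) d₁ →
      SplitDepth T (side T S u v v) d₂ →
      SplitDepth T S (1 + max d₁ d₂)

/-- `SplitColoring T c S lvl d`: a run of the recursive balanced-edge-splitting
process on the component `S`, starting at iteration number `lvl`, taking `d`
further rounds, in which every removed edge `e` gets the color `d(e)` = the
number of the iteration at which it is removed (as recorded by `c`). -/
inductive SplitColoring {V : Type*} (T : SimpleGraph V) (c : Sym2 V → ℕ) :
    Set V → ℕ → ℕ → Prop
  | single (v : V) (lvl : ℕ) : SplitColoring T c {v} lvl 0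
  | split (S : Set V) (u v : V) (lvl d₁ d₂ : ℕ) :
      BalancedIn T S u v →
      c s(u, v) = lvl →
      SplitColoring T c (side T S u v u) (lvl + 1) d₁ →
      SplitColoring T c (side T S u v v) (lvl + 1) d₂ →
      SplitColoring T c S lvl (1 + max d₁ d₂)

/-! If `x ≠ y` lie in a piece `S` that the algorithm splits at the edge `uv` in iteration `lvl`,
either both stay on one side and we recurse, or the `x`–`y` path runs through `uv`. In the
latter case every other edge of the path lies inside one of the two sides, which are only
split from iteration `lvl + 1` on, so the color `lvl` occurs on the path exactly once. -/

open SimpleGraph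

namespace SimpleGraph.Walk

variable {V : Type*} {G : SimpleGraph V} {x y : V}

def IsConflictFree (c : Sym2 V → ℕ) (p : G.Walk x y) : Prop :=
  ∃ col : ℕ, (p.edges.filter (fun e => c e = col)).length = 1

lemma IsConflictFree.reverse {c : Sym2 V → ℕ} {p : G.Walk x y} (hp : p.IsConflictFree c) :
    p.reverse.IsConflictFree c := by
  obtain ⟨col, hcol⟩ := hp
  exact ⟨col, by rwa [edges_reverse, List.filter_reverse, List.length_reverse]⟩

end SimpleGraph.Walk

lemma IsCFCColoring.comp_of_injOn {V : Type*} {G : SimpleGraph V} {c : Sym2 V → ℕ}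
    (hc : IsCFCColoring G c) {f : ℕ → ℕ} (hf : Set.InjOn f (c '' G.edgeSet)) :
    IsCFCColoring G (f ∘ c) := by
  intro x y hne
  obtain ⟨p, hp, col, hcol⟩ := hc x y hne
  obtain ⟨e₀, he₀⟩ := List.length_eq_one_iff.mp hcol
  have hcol_mem : col ∈ c '' G.edgeSet := by
    have he₀_mem : e₀ ∈ p.edges.filter (fun e => c e = col) := by simp [he₀]
    rw [List.mem_filter, decide_eq_true_iff] at he₀_mem
    exact ⟨e₀, p.edges_subset_edgeSet he₀_mem.1, he₀_mem.2⟩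
  refine ⟨p, hp, f col, ?_⟩
  rw [← hcol]
  congr 1
  refine List.filter_congr fun e he => ?_
  simp only [Function.comp_apply, decide_eq_decide]
  exact hf.eq_iff ⟨e, p.edges_subset_edgeSet he, rfl⟩ hcol_mem

lemma cfcNum_le_of_isCFCColoring {V : Type*} [Fintype V] {G : SimpleGraph V} {c : Sym2 V → ℕ}
    {k : ℕ} (hc : IsCFCColoring G c) (hk : ∀ e ∈ G.edgeSet, c e < k) : cfcNum G ≤ k :=
  Nat.sInf_le ⟨c, hk, hc⟩

def PreconnectedOn {V : Type*} (G : SimpleGraph V) (S : Set V) : Prop :=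
  ∀ x ∈ S, ∀ y ∈ S, ∃ p : G.Walk x y, ∀ z ∈ p.support, z ∈ S

lemma PreconnectedOn.exists_isPath {V : Type*} {G : SimpleGraph V} {S : Set V}
    (hS : PreconnectedOn G S) {x y : V} (hx : x ∈ S) (hy : y ∈ S) :
    ∃ p : G.Walk x y, p.IsPath ∧ ∀ z ∈ p.support, z ∈ S := by
  classical
  obtain ⟨p, hp⟩ := hS x hx y hy
  exact ⟨p.toPath, p.toPath.2, fun z hz => hp z (p.support_toPath_subset_support hz)⟩

section Side

variable {V : Type*} {T : SimpleGraph V} {S : Set V} {u v w x y : V}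

lemma eRestrict_adj :
    (eRestrict T S u v).Adj x y ↔ T.Adj x y ∧ x ∈ S ∧ y ∈ S ∧ s(x, y) ≠ s(u, v) := by
  rw [eRestrict, fromRel_adj]
  constructor
  · rintro ⟨-, h | ⟨hyx, hy, hx, hne⟩⟩
    · exact h
    · exact ⟨hyx.symm, hx, hy, by rwa [Sym2.eq_swap]⟩
  · exact fun h => ⟨h.1.ne, Or.inl h⟩

lemma eRestrict_le_deleteEdges : eRestrict T S u v ≤ T.deleteEdges {s(u, v)} := fun _ _ h => by
  obtain ⟨hadj, -, -, hne⟩ := eRestrict_adj.mp h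
  exact deleteEdges_adj.mpr ⟨hadj, hne⟩

lemma eRestrict_le : eRestrict T S u v ≤ T :=
  eRestrict_le_deleteEdges.trans (deleteEdges_le _)

lemma mem_side_self : w ∈ side T S u v w := Reachable.refl w

lemma preconnectedOn_side : PreconnectedOn T (side T S u v w) := by
  classical
  rintro x hx y hy
  obtain ⟨q⟩ := hx.symm.trans hy
  exact ⟨q.mapLe eRestrict_le, fun z hz => hx.trans ⟨q.takeUntil z (by simpa using hz)⟩⟩

lemma disjoint_side (hT : T.IsAcyclic) (huv : T.Adj u v) :
    Disjoint (side T S u v u) (side T S u v v) :=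
  Set.disjoint_left.mpr fun _ hu hv =>
    isAcyclic_iff_forall_adj_isBridge.mp hT huv
      ((hu.trans hv.symm).mono eRestrict_le_deleteEdges)

lemma mem_side_union (hS : PreconnectedOn T S) (hu : u ∈ S) (hx : x ∈ S) :
    x ∈ side T S u v u ∪ side T S u v v := by
  obtain ⟨p, hp⟩ := hS u hu x hx
  by_contra hxU
  obtain ⟨⟨⟨a, b⟩, hab⟩, hd, ha, hb⟩ :=
    p.exists_boundary_dart _ (Or.inl mem_side_self) hxU
  have haS := hp a (p.dart_fst_mem_support_of_mem_darts hd)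
  have hbS := hp b (p.dart_snd_mem_support_of_mem_darts hd)
  by_cases he : s(a, b) = s(u, v)
  · obtain ⟨-, rfl⟩ | ⟨-, rfl⟩ := Sym2.eq_iff.mp he
    · exact hb (Or.inr mem_side_self)
    · exact hb (Or.inl mem_side_self)
  · have hstep : (eRestrict T S u v).Reachable a b :=
      (eRestrict_adj.mpr ⟨hab, haS, hbS, he⟩).reachable
    exact hb (ha.imp (·.trans hstep) (·.trans hstep))

end Side

namespace SplitColoring

variable {V : Type*} {T : SimpleGraph V} {c : Sym2 V → ℕ} {S : Set V} {lvl d : ℕ} {x y : V}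

theorem color_mem_Ico (h : SplitColoring T c S lvl d) (hS : PreconnectedOn T S)
    (hxy : T.Adj x y) (hx : x ∈ S) (hy : y ∈ S) : c s(x, y) ∈ Set.Ico lvl (lvl + d) := by
  induction h generalizing x y with
  | single v lvl => exact absurd (hx.trans hy.symm) hxy.ne
  | split S u v lvl d₁ d₂ hbal hc h₁ h₂ ih₁ ih₂ =>
    by_cases he : s(x, y) = s(u, v)
    · rw [he, hc]
      exact ⟨le_rfl, by omega⟩
    have hstep : (eRestrict T S u v).Reachable x y :=
      (eRestrict_adj.mpr ⟨hxy, hx, hy, he⟩).reachable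
    rcases mem_side_union hS hbal.2.1 hx with hxu | hxv
    · exact Set.Ico_subset_Ico (by omega) (by omega)
        (ih₁ preconnectedOn_side hxy hxu (hxu.trans hstep))
    · exact Set.Ico_subset_Ico (by omega) (by omega)
        (ih₂ preconnectedOn_side hxy hxv (hxv.trans hstep))

theorem filter_color_eq_nil_of_lt (h : SplitColoring T c S lvl d) (hS : PreconnectedOn T S)
    (p : T.Walk x y) (hp : ∀ z ∈ p.support, z ∈ S) {k : ℕ} (hk : k < lvl) :
    p.edges.filter (fun e => c e = k) = [] := by
  refine List.filter_eq_nil_iff.mpr fun e he => ?_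
  induction e using Sym2.ind with
  | _ a b =>
    have := (h.color_mem_Ico hS (p.adj_of_mem_edges he) (hp a (p.fst_mem_support_of_mem_edges he))
      (hp b (p.snd_mem_support_of_mem_edges he))).1
    simp only [decide_eq_true_eq]
    omega

theorem exists_isPath_isConflictFree_of_mem_side {u v a b : V} {d₁ d₂ : ℕ} (hT : T.IsAcyclic)
    (huv : T.Adj u v) (hc : c s(u, v) = lvl)
    (h₁ : SplitColoring T c (side T S u v u) (lvl + 1) d₁)
    (h₂ : SplitColoring T c (side T S u v v) (lvl + 1) d₂)
    (ha : a ∈ side T S u v u) (hb : b ∈ side T S u v v) :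
    ∃ p : T.Walk a b, p.IsPath ∧ p.IsConflictFree c := by
  obtain ⟨p₁, hp₁, hs₁⟩ := preconnectedOn_side.exists_isPath ha mem_side_self
  obtain ⟨p₂, hp₂, hs₂⟩ := preconnectedOn_side.exists_isPath mem_side_self hb
  refine ⟨p₁.append (.cons huv p₂), ?_, lvl, ?_⟩
  · rw [Walk.isPath_def, Walk.support_append, Walk.support_cons, List.tail_cons]
    exact hp₁.support_nodup.append hp₂.support_nodup fun z hz₁ hz₂ =>
      Set.disjoint_left.mp (disjoint_side hT huv) (hs₁ z hz₁) (hs₂ z hz₂)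
  · rw [Walk.edges_append, Walk.edges_cons, List.filter_append,
      List.filter_cons_of_pos (by simpa using hc),
      h₁.filter_color_eq_nil_of_lt preconnectedOn_side p₁ hs₁ (Nat.lt_succ_self lvl),
      h₂.filter_color_eq_nil_of_lt preconnectedOn_side p₂ hs₂ (Nat.lt_succ_self lvl)]
    rfl

theorem exists_isPath_isConflictFree (h : SplitColoring T c S lvl d) (hT : T.IsAcyclic)
    (hS : PreconnectedOn T S) (hx : x ∈ S) (hy : y ∈ S) (hne : x ≠ y) :
    ∃ p : T.Walk x y, p.IsPath ∧ p.IsConflictFree c := by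
  induction h generalizing x y with
  | single v lvl => exact absurd (hx.trans hy.symm) hne
  | split S u v lvl d₁ d₂ hbal hc h₁ h₂ ih₁ ih₂ =>
    rcases mem_side_union hS hbal.2.1 hx with hxu | hxv <;>
      rcases mem_side_union hS hbal.2.1 hy with hyu | hyv
    · exact ih₁ preconnectedOn_side hxu hyu hne
    · exact exists_isPath_isConflictFree_of_mem_side hT hbal.1 hc h₁ h₂ hxu hyv
    · obtain ⟨p, hp, hcf⟩ :=
        exists_isPath_isConflictFree_of_mem_side hT hbal.1 hc h₁ h₂ hyu hxv
      exact ⟨p.reverse, hp.reverse, hcf.reverse⟩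
    · exact ih₂ preconnectedOn_side hxv hyv hne

end SplitColoring

/-- Coloring each edge of a tree `T` by the iteration at which the recursive
balanced-edge-splitting algorithm removes it yields a conflict-free connection
coloring; consequently `cfc(T) ≤ d(T)`. -/
theorem splitColoring_isCFC {V : Type*} [Fintype V] (T : SimpleGraph V)
    (hT : T.IsTree) (c : Sym2 V → ℕ) (d : ℕ)
    (h : SplitColoring T c Set.univ 1 d) :
    IsCFCColoring T c ∧ cfcNum T ≤ d := by
  have hS : PreconnectedOn T Set.univ := fun x _ y _ =>
    ⟨(hT.connected x y).some, fun _ _ => trivial⟩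
  have hcol : ∀ e ∈ T.edgeSet, c e ∈ Set.Ico 1 (1 + d) := fun e he => by
    induction e using Sym2.ind with
    | _ x y => exact h.color_mem_Ico hS he trivial trivial
  have hcfc : IsCFCColoring T c := fun x y hne =>
    h.exists_isPath_isConflictFree hT.isAcyclic hS trivial trivial hne
  -- the algorithm numbers its iterations from 1, `cfcNum` counts colors from 0
  have hshift : Set.InjOn (· - 1) (c '' T.edgeSet) := by
    rintro _ ⟨e, he, rfl⟩ _ ⟨e', he', rfl⟩ heq
    have := hcol e he
    have := hcol e' he'
    simp only [Set.mem_Ico] at *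
    omega
  refine ⟨hcfc, cfcNum_le_of_isCFCColoring (hcfc.comp_of_injOn hshift) fun e he => ?_⟩
  have := hcol e he
  simp only [Set.mem_Ico, Function.comp_apply] at *
  omega
end

section
/- For the complete binary tree B_k^* with k levels (and 2^k − 1 vertices), k ≤ cfc(B_k^*) ≤ 2k − 2 (for k ≥ 2). -/
/-- The complete binary tree with `k` levels and `2^k - 1` vertices, in heap
indexing: vertex `0` is the root, and each nonzero vertex `x` has parent
`(x - 1) / 2`. -/
def completeBinaryTree (k : ℕ) : SimpleGraph (Fin (2 ^ k - 1)) :=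
  SimpleGraph.fromRel (fun x y => (x : ℕ) ≠ 0 ∧ (y : ℕ) = ((x : ℕ) - 1) / 2)

def colorParity {α : Type*} (c : α → ℕ) (l : List α) : ℕ :=
  (l.map (2 ^ c ·)).foldr (· ^^^ ·) 0

section ColorParity

variable {α : Type*} (c : α → ℕ)

@[simp]
lemma colorParity_nil : colorParity c [] = 0 := rfl

@[simp]
lemma colorParity_cons (e : α) (l : List α) :
    colorParity c (e :: l) = 2 ^ c e ^^^ colorParity c l := rfl

lemma colorParity_append (l₁ l₂ : List α) :
    colorParity c (l₁ ++ l₂) = colorParity c l₁ ^^^ colorParity c l₂ := by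
  induction l₁ with
  | nil => simp
  | cons e l ih => simp [ih, Nat.xor_assoc]

lemma testBit_colorParity (l : List α) (i : ℕ) :
    (colorParity c l).testBit i = true ↔ Odd (l.filter (fun e => c e = i)).length := by
  induction l with
  | nil => simp
  | cons e l ih =>
    by_cases he : c e = i
    · simp [Nat.testBit_xor, he, Nat.odd_add_one, ← ih]
    · simp [Nat.testBit_xor, he, ih]

lemma colorParity_lt_two_pow {l : List α} {t : ℕ} (h : ∀ e ∈ l, c e < t) :
    colorParity c l < 2 ^ t := by
  induction l with
  | nil => simp
  | cons e l ih =>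
    simp only [List.mem_cons, forall_eq_or_imp] at h
    exact Nat.xor_lt_two_pow (Nat.pow_lt_pow_right one_lt_two h.1) (ih h.2)

end ColorParity

namespace SimpleGraph

variable {V : Type*} {G : SimpleGraph V}

lemma IsAcyclic.colorParity_xor_of_adj (hG : G.IsAcyclic) (c : Sym2 V → ℕ) {r v w : V}
    {p : G.Walk r v} {q : G.Walk r w} (hp : p.IsPath) (hq : q.IsPath) (hadj : G.Adj v w) :
    colorParity c p.edges ^^^ colorParity c q.edges = 2 ^ c s(v, w) := by
  by_cases hv : v ∈ q.support
  · rw [hG.path_concat hp hq hadj hv, Walk.edges_concat, List.concat_eq_append, colorParity_append]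
    simp
  · have hw := hG.mem_support_of_ne_mem_support_of_adj_of_isPath hp hq hadj hv
    rw [hG.path_concat hq hp hadj.symm hw, Walk.edges_concat, List.concat_eq_append,
      colorParity_append, Sym2.eq_swap]
    simp [Nat.xor_comm]

lemma IsAcyclic.colorParity_edges_eq_xor (hG : G.IsAcyclic) (c : Sym2 V → ℕ) {r : V}
    (P : ∀ x, G.Walk r x) (hP : ∀ x, (P x).IsPath) {u v : V} (p : G.Walk u v) :
    colorParity c p.edges = colorParity c (P u).edges ^^^ colorParity c (P v).edges := by
  induction p with
  | nil => simp
  | cons hadj p ih =>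
    rw [Walk.edges_cons, colorParity_cons, ih, ← hG.colorParity_xor_of_adj c (hP _) (hP _) hadj]
    simp [Nat.xor_assoc]

theorem IsTree.card_le_two_pow_of_isCFCColoring [Fintype V] (hG : G.IsTree)
    {c : Sym2 V → ℕ} {t : ℕ} (hc : ∀ e ∈ G.edgeSet, c e < t) (hcfc : IsCFCColoring G c) :
    Fintype.card V ≤ 2 ^ t := by
  classical
  obtain ⟨r⟩ := hG.connected.nonempty
  let P x := (hG.connected r x).some.bypass
  let potential x := colorParity c (P x).edges
  have hlt x : potential x < 2 ^ t :=
    colorParity_lt_two_pow c fun e he => hc e ((P x).edges_subset_edgeSet he)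
  have hinj : Function.Injective potential := by
    intro u v huv
    by_contra hne
    obtain ⟨p, -, col, hcol⟩ := hcfc u v hne
    have hodd := (testBit_colorParity c p.edges col).mpr (hcol ▸ odd_one)
    rw [hG.isAcyclic.colorParity_edges_eq_xor c P (fun x => Walk.bypass_isPath _) p] at hodd
    simp [potential, huv] at hodd
  simpa using Fintype.card_le_of_injective (fun x => (⟨potential x, hlt x⟩ : Fin (2 ^ t)))
    fun u v h => hinj (congrArg Fin.val h)

variable [Fintype V]

lemma cfcNum_le_of_isCFCColoring {c : Sym2 V → ℕ} {t : ℕ} (hc : ∀ e ∈ G.edgeSet, c e < t)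
    (hcfc : IsCFCColoring G c) : cfcNum G ≤ t :=
  Nat.sInf_le ⟨c, hc, hcfc⟩

theorem IsTree.card_le_two_pow_cfcNum (hG : G.IsTree) {c : Sym2 V → ℕ} {t : ℕ}
    (hc : ∀ e ∈ G.edgeSet, c e < t) (hcfc : IsCFCColoring G c) :
    Fintype.card V ≤ 2 ^ cfcNum G := by
  have hmem : t ∈ {k | ∃ c : Sym2 V → ℕ, (∀ e ∈ G.edgeSet, c e < k) ∧ IsCFCColoring G c} :=
    ⟨c, hc, hcfc⟩
  obtain ⟨c', hc', hcfc'⟩ := Nat.sInf_mem ⟨t, hmem⟩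
  exact hG.card_le_two_pow_of_isCFCColoring hc' hcfc'

end SimpleGraph

def heapParent (x : ℕ) : ℕ := (x - 1) / 2

def heapDepth (x : ℕ) : ℕ := Nat.log 2 (x + 1)

def upChain (x j : ℕ) : List ℕ := (List.range j).map (heapParent^[·] x)

/-- Two colors per level: the parity of the index tells the two children of a vertex apart. -/
def heapColor (x : ℕ) : ℕ := 2 * (heapDepth x - 1) + x % 2

lemma heapParent_lt {x : ℕ} (hx : x ≠ 0) : heapParent x < x := by
  unfold heapParent; omega

lemma heapParent_le (x : ℕ) : heapParent x ≤ x := by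
  unfold heapParent; omega

lemma iterate_heapParent_le (j x : ℕ) : heapParent^[j] x ≤ x := by
  induction j generalizing x with
  | zero => rfl
  | succ j ih => exact (ih _).trans (heapParent_le x)

lemma heapDepth_eq_zero_iff {x : ℕ} : heapDepth x = 0 ↔ x = 0 := by
  simp [heapDepth, Nat.log_eq_zero_iff]

lemma heapDepth_heapParent (x : ℕ) : heapDepth (heapParent x) = heapDepth x - 1 := by
  rcases eq_or_ne x 0 with rfl | hx
  · rfl
  rw [heapDepth, heapDepth, ← Nat.log_div_base, show heapParent x + 1 = (x + 1) / 2 by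
    unfold heapParent; omega]

lemma heapDepth_iterate_heapParent (j x : ℕ) :
    heapDepth (heapParent^[j] x) = heapDepth x - j := by
  induction j with
  | zero => rfl
  | succ j ih => rw [Function.iterate_succ_apply', heapDepth_heapParent, ih, Nat.sub_sub]

lemma iterate_heapParent_heapDepth (x : ℕ) : heapParent^[heapDepth x] x = 0 := by
  rw [← heapDepth_eq_zero_iff, heapDepth_iterate_heapParent, Nat.sub_self]

lemma heapDepth_eq_of_heapColor_eq {x y : ℕ} (hx : x ≠ 0) (hy : y ≠ 0)
    (h : heapColor x = heapColor y) : heapDepth x = heapDepth y := by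
  have := heapDepth_eq_zero_iff.not.mpr hx
  have := heapDepth_eq_zero_iff.not.mpr hy
  unfold heapColor at h
  omega

lemma heapColor_ne_of_heapParent_eq {x y : ℕ} (hx : x ≠ 0) (hy : y ≠ 0) (hxy : x ≠ y)
    (h : heapParent x = heapParent y) : heapColor x ≠ heapColor y := by
  have hd := congrArg heapDepth h
  rw [heapDepth_heapParent, heapDepth_heapParent] at hd
  have := heapDepth_eq_zero_iff.not.mpr hx
  have := heapDepth_eq_zero_iff.not.mpr hy
  unfold heapColor
  unfold heapParent at h
  omega

lemma heapParent_iterate_pred {j : ℕ} (hj : 0 < j) (x : ℕ) :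
    heapParent (heapParent^[j - 1] x) = heapParent^[j] x := by
  rw [← Function.iterate_succ_apply' heapParent, Nat.succ_eq_add_one, Nat.sub_add_cancel hj]

@[simp]
lemma upChain_zero (x : ℕ) : upChain x 0 = [] := rfl

lemma upChain_succ (x j : ℕ) : upChain x (j + 1) = x :: upChain (heapParent x) j := by
  simp only [upChain, List.range_succ_eq_map, List.map_cons, List.map_map]
  rfl

lemma mem_upChain {x j y : ℕ} : y ∈ upChain x j ↔ ∃ i < j, heapParent^[i] x = y := by
  simp [upChain, eq_comm]

lemma le_of_mem_upChain {x j y : ℕ} (h : y ∈ upChain x j) : y ≤ x := by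
  obtain ⟨i, -, rfl⟩ := mem_upChain.mp h
  exact iterate_heapParent_le i x

/-- Climbing from `u` and `v` to their lowest common ancestor. -/
theorem exists_upChain_append_nodup (u v : ℕ) :
    ∃ ju jv, ju ≤ heapDepth u ∧ jv ≤ heapDepth v ∧ heapParent^[ju] u = heapParent^[jv] v ∧
      (upChain u ju ++ upChain v jv).Nodup := by
  induction hn : u + v using Nat.strong_induction_on generalizing u v with
  | _ n ih =>
  wlog hvu : v ≤ u generalizing u v
  · obtain ⟨jv, ju, hjv, hju, h, hnd⟩ := this v u (by omega) (by omega)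
    exact ⟨ju, jv, hju, hjv, h.symm, List.nodup_append_comm.mp hnd⟩
  rcases hvu.eq_or_lt with rfl | hvu
  · exact ⟨0, 0, by simp, by simp, rfl, by simp⟩
  have hu : u ≠ 0 := by omega
  have hpu := heapParent_lt hu
  obtain ⟨ju, jv, hju, hjv, h, hnd⟩ := ih _ (by omega) (heapParent u) v rfl
  refine ⟨ju + 1, jv, ?_, hjv, by rwa [Function.iterate_succ_apply], ?_⟩
  · have := heapDepth_eq_zero_iff.not.mpr hu
    rw [heapDepth_heapParent] at hju
    omega
  rw [upChain_succ, List.cons_append, List.nodup_cons, List.mem_append]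
  refine ⟨?_, hnd⟩
  rintro (h | h) <;> have := le_of_mem_upChain h <;> omega

/-- On the two chains, the only other vertex at the depth of `heapParent^[ju - 1] u` is its
sibling, whose index has the other parity. -/
lemma eq_of_heapColor_eq_of_mem_upChain {u v ju jv : ℕ} (hju : ju ≤ heapDepth u)
    (hjv : jv ≤ heapDepth v) (hl : heapParent^[ju] u = heapParent^[jv] v)
    (hnd : (upChain u ju ++ upChain v jv).Nodup) (hpos : 0 < ju) {x : ℕ}
    (hx : x ∈ upChain u ju ++ upChain v jv)
    (hcol : heapColor x = heapColor (heapParent^[ju - 1] u)) : x = heapParent^[ju - 1] u := by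
  have hdepth := congrArg heapDepth hl
  simp only [heapDepth_iterate_heapParent] at hdepth
  have hne {y j i : ℕ} (hi : i < j) (hj : j ≤ heapDepth y) : heapParent^[i] y ≠ 0 := by
    rw [Ne, ← heapDepth_eq_zero_iff, heapDepth_iterate_heapParent]; omega
  have ha : heapParent^[ju - 1] u ∈ upChain u ju := mem_upChain.mpr ⟨ju - 1, by omega, rfl⟩
  have ha0 : heapParent^[ju - 1] u ≠ 0 := hne (by omega) hju
  rw [List.mem_append, mem_upChain, mem_upChain] at hx
  rcases hx with ⟨i, hi, rfl⟩ | ⟨i, hi, rfl⟩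
  · have hd := heapDepth_eq_of_heapColor_eq (hne hi hju) ha0 hcol
    simp only [heapDepth_iterate_heapParent] at hd
    rw [show i = ju - 1 by omega]
  · have hd := heapDepth_eq_of_heapColor_eq (hne hi hjv) ha0 hcol
    simp only [heapDepth_iterate_heapParent] at hd
    obtain rfl : i = jv - 1 := by omega
    refine absurd hcol (heapColor_ne_of_heapParent_eq (hne hi hjv) ha0 ?_ ?_)
    · exact (List.nodup_append.mp hnd).2.2 _ ha _ (mem_upChain.mpr ⟨_, hi, rfl⟩) |>.symm
    · rw [heapParent_iterate_pred (by omega), heapParent_iterate_pred hpos, hl]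

def heapTree (N : ℕ) : SimpleGraph (Fin N) :=
  SimpleGraph.fromRel (fun x y => (x : ℕ) ≠ 0 ∧ (y : ℕ) = heapParent x)

def heapEdgeColor {N : ℕ} (e : Sym2 (Fin N)) : ℕ := heapColor e.sup

namespace heapTree

open SimpleGraph

variable {N : ℕ}

def parent (x : Fin N) : Fin N := ⟨heapParent x, (heapParent_le x).trans_lt x.2⟩

lemma adj_parent {x : Fin N} (hx : (x : ℕ) ≠ 0) : (heapTree N).Adj x (parent x) := by
  refine (fromRel_adj _ _ _).mpr ⟨fun h => ?_, .inl ⟨hx, rfl⟩⟩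
  exact (heapParent_lt hx).ne' (congrArg Fin.val h)

lemma sup_parent (x : Fin N) : (s(x, parent x).sup : ℕ) = x :=
  congrArg Fin.val (max_eq_left (heapParent_le x))

lemma exists_eq_parent_of_mem_edgeSet {e : Sym2 (Fin N)} (he : e ∈ (heapTree N).edgeSet) :
    ∃ x : Fin N, (x : ℕ) ≠ 0 ∧ e = s(x, parent x) := by
  induction e using Sym2.ind with
  | _ x y =>
    obtain ⟨-, ⟨hx, hy⟩ | ⟨hy, hx⟩⟩ := (fromRel_adj _ _ _).mp ((mem_edgeSet _).mp he)
    · exact ⟨x, hx, by rw [show y = parent x from Fin.ext hy]⟩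
    · exact ⟨y, hy, by rw [show x = parent y from Fin.ext hx, Sym2.eq_swap]⟩

lemma exists_walk_up (x : Fin N) {j : ℕ} (hj : j ≤ heapDepth x) :
    ∃ (y : Fin N) (p : (heapTree N).Walk x y), (y : ℕ) = heapParent^[j] x ∧
      p.edges.map (fun e => (e.sup : ℕ)) = upChain x j := by
  induction j generalizing x with
  | zero => exact ⟨x, .nil, rfl, rfl⟩
  | succ j ih =>
    have hx : (x : ℕ) ≠ 0 := by rw [Ne, ← heapDepth_eq_zero_iff]; omega
    obtain ⟨y, p, hy, hp⟩ := ih (parent x) (by rw [parent, heapDepth_heapParent]; omega)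
    exact ⟨y, .cons (adj_parent hx) p, hy, by
      rw [Walk.edges_cons, List.map_cons, hp, sup_parent, upChain_succ]; rfl⟩

lemma exists_walk_of_iterate_heapParent_eq {u v : Fin N} {ju jv : ℕ} (hju : ju ≤ heapDepth u)
    (hjv : jv ≤ heapDepth v) (hl : heapParent^[ju] u = heapParent^[jv] v) :
    ∃ p : (heapTree N).Walk u v,
      p.edges.map (fun e => (e.sup : ℕ)) = upChain u ju ++ (upChain v jv).reverse := by
  obtain ⟨y, pu, hy, hpu⟩ := exists_walk_up u hju
  obtain ⟨y', pv, hy', hpv⟩ := exists_walk_up v hjv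
  obtain rfl : y = y' := Fin.ext (by rw [hy, hy', hl])
  exact ⟨pu.append pv.reverse, by
    rw [Walk.edges_append, Walk.edges_reverse, List.map_append, List.map_reverse, hpu, hpv]⟩

theorem isTree (hN : 0 < N) : (heapTree N).IsTree := by
  have hconn : (heapTree N).Connected := by
    refine (connected_iff_exists_forall_reachable _).mpr ⟨⟨0, hN⟩, fun x => ?_⟩
    obtain ⟨y, p, hy, -⟩ := exists_walk_up x le_rfl
    rw [iterate_heapParent_heapDepth] at hy
    exact (p.copy rfl (Fin.ext hy)).reverse.reachable
  let toEdge (i : Fin (N - 1)) : (heapTree N).edgeSet :=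
    ⟨s(⟨i + 1, by omega⟩, parent ⟨i + 1, by omega⟩), adj_parent (Nat.succ_ne_zero i)⟩
  have hbij : Function.Bijective toEdge := by
    refine ⟨fun i j h => ?_, fun ⟨e, he⟩ => ?_⟩
    · have := congrArg (fun e : (heapTree N).edgeSet => ((e : Sym2 (Fin N)).sup : ℕ)) h
      simp only [toEdge, sup_parent] at this
      exact Fin.ext (by omega)
    · obtain ⟨x, hx, rfl⟩ := exists_eq_parent_of_mem_edgeSet he
      refine ⟨⟨x - 1, by omega⟩, ?_⟩
      simp only [toEdge, Nat.sub_add_cancel (Nat.pos_of_ne_zero hx)]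
  rw [isTree_iff_connected_and_card, ← Nat.card_eq_of_bijective toEdge hbij]
  simp only [Nat.card_eq_fintype_card, Fintype.card_fin]
  exact ⟨hconn, by omega⟩

lemma heapEdgeColor_lt {e : Sym2 (Fin N)} (he : e ∈ (heapTree N).edgeSet) :
    heapEdgeColor e < 2 * Nat.log 2 N := by
  obtain ⟨x, hx, rfl⟩ := exists_eq_parent_of_mem_edgeSet he
  have hpos : heapDepth x ≠ 0 := heapDepth_eq_zero_iff.not.mpr hx
  have hle : heapDepth x ≤ Nat.log 2 N := Nat.log_mono_right x.2
  rw [heapEdgeColor, sup_parent, heapColor]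
  omega

lemma exists_isPath_heapEdgeColor_unique {u v : Fin N} {ju jv : ℕ} (hju : ju ≤ heapDepth u)
    (hjv : jv ≤ heapDepth v) (hl : heapParent^[ju] u = heapParent^[jv] v)
    (hnd : (upChain u ju ++ upChain v jv).Nodup) (hpos : 0 < ju) :
    ∃ p : (heapTree N).Walk u v, p.IsPath ∧
      ∃ col, (p.edges.filter (fun e => heapEdgeColor e = col)).length = 1 := by
  obtain ⟨p, hp⟩ := exists_walk_of_iterate_heapParent_eq hju hjv hl
  have hnd' : (upChain u ju ++ (upChain v jv).reverse).Nodup :=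
    ((List.reverse_perm _).append_left _).nodup_iff.mpr hnd
  set a := heapParent^[ju - 1] u
  have ha : a ∈ upChain u ju ++ (upChain v jv).reverse :=
    List.mem_append_left _ (mem_upChain.mpr ⟨ju - 1, by omega, rfl⟩)
  refine ⟨p, ?_, heapColor a, ?_⟩
  · rw [(isTree (Fin.pos u)).isAcyclic.isPath_iff_isTrail, Walk.isTrail_def]
    exact List.Nodup.of_map _ (hp ▸ hnd')
  calc (p.edges.filter (fun e => heapEdgeColor e = heapColor a)).length
      = (upChain u ju ++ (upChain v jv).reverse).countP (fun x => heapColor x = heapColor a) := by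
        rw [← hp, List.countP_map, List.countP_eq_length_filter]; rfl
    _ = (upChain u ju ++ (upChain v jv).reverse).count a := by
        refine List.countP_congr fun x hx => ?_
        simp only [decide_eq_true_eq, beq_iff_eq]
        refine ⟨eq_of_heapColor_eq_of_mem_upChain hju hjv hl hnd hpos ?_, fun h => h ▸ rfl⟩
        simpa using hx
    _ = 1 := List.count_eq_one_of_mem hnd' ha

theorem isCFCColoring (N : ℕ) : IsCFCColoring (heapTree N) heapEdgeColor := by
  intro u v huv
  obtain ⟨ju, jv, hju, hjv, hl, hnd⟩ := exists_upChain_append_nodup u v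
  rcases Nat.eq_zero_or_pos ju with rfl | hpos
  · have hpos : 0 < jv := Nat.pos_of_ne_zero fun h => huv (Fin.ext (by simpa [h] using hl))
    obtain ⟨p, hp, col, hcol⟩ := exists_isPath_heapEdgeColor_unique hjv hju hl.symm
      (List.nodup_append_comm.mp hnd) hpos
    exact ⟨p.reverse, hp.reverse, col, by
      rw [Walk.edges_reverse, List.filter_reverse, List.length_reverse, hcol]⟩
  · exact exists_isPath_heapEdgeColor_unique hju hjv hl hnd hpos

theorem cfcNum_le (N : ℕ) : cfcNum (heapTree N) ≤ 2 * Nat.log 2 N :=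
  cfcNum_le_of_isCFCColoring (fun _ => heapEdgeColor_lt) (isCFCColoring N)

end heapTree

/-- For the complete binary tree `B_k^*` with `k` levels (`k ≥ 2`),
`k ≤ cfc(B_k^*) ≤ 2k - 2`. -/
theorem cfc_completeBinaryTree (k : ℕ) (hk : 2 ≤ k) :
    k ≤ cfcNum (completeBinaryTree k) ∧ cfcNum (completeBinaryTree k) ≤ 2 * k - 2 := by
  obtain ⟨m, rfl⟩ : ∃ m, k = m + 2 := ⟨k - 2, by omega⟩
  change m + 2 ≤ cfcNum (heapTree _) ∧ cfcNum (heapTree _) ≤ _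
  have hpow : 2 ^ (m + 1) < 2 ^ (m + 2) - 1 := by
    have := Nat.le_self_pow (Nat.succ_ne_zero m) 2
    rw [pow_succ 2 (m + 1)]
    omega
  have hlog : Nat.log 2 (2 ^ (m + 2) - 1) = m + 1 :=
    Nat.log_eq_of_pow_le_of_lt_pow hpow.le (Nat.sub_lt (Nat.two_pow_pos _) one_pos)
  have hcard := (heapTree.isTree (Nat.zero_lt_of_lt hpow)).card_le_two_pow_cfcNum
    (fun _ => heapTree.heapEdgeColor_lt) (heapTree.isCFCColoring _)
  rw [Fintype.card_fin] at hcard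
  have hlower := (Nat.pow_lt_pow_iff_right (by norm_num)).mp (hpow.trans_le hcard)
  have hupper := heapTree.cfcNum_le (2 ^ (m + 2) - 1)
  omega
end
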